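/- Assume T_n is positive definite. For a ∈ ℝ^{n+1} with a(ζ_j) ≠ 0 for all j and Σ_{k=0}^n γ_k(a) b_k ≠ 0, define σ²(a) := ( Σ_{k=0}^n c_k a_k ) / ( Σ_{k=0}^n γ_k(a) b_k ). Then the iteration map a ↦ σ²(a) T_n^{−1} T_γ(a) b coincides with the scaled quasi-Newton step a ↦ σ²(a) [ a − (1/2) T_n^{−1} ∇𝕁_P(a) ]. -/

import Mathlib

open Finset Complex Matrix

noncomputable section

/-- The point `ζ_j = exp(iπ j / N)` of the discrete unit circle `𝕋_{2N}`. -/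
def zeta (N : ℕ) (j : ℤ) : ℂ := Complex.exp (Real.pi * Complex.I * j / N)

/-- The index set `j = -N+1, …, N`. -/
def Idx (N : ℕ) : Finset ℤ := Finset.Icc (-(N : ℤ) + 1) (N : ℤ)

/-- `a(ζ) = Σ_{k=0}^n a_k ζ^{-k}`. -/
def evC {n : ℕ} (a : Fin (n + 1) → ℝ) (z : ℂ) : ℂ :=
  ∑ k : Fin (n + 1), (a k : ℂ) * z ^ (-(k.val : ℤ))

/-- The symmetric Toeplitz matrix `T_n` with `(i,j)` entry `c_{|i-j|}`. -/
def Toep {n : ℕ} (c : Fin (n + 1) → ℝ) : Matrix (Fin (n + 1)) (Fin (n + 1)) ℝ :=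
  fun i j => c ⟨max ((i : ℕ) - (j : ℕ)) ((j : ℕ) - (i : ℕ)),
    by have := i.isLt; have := j.isLt; omega⟩

/-- `P(ζ) = b(ζ) b(ζ^{-1})`. -/
def PPd {n : ℕ} (b : Fin (n + 1) → ℝ) (z : ℂ) : ℂ := evC b z * evC b z⁻¹

/-- `𝕁_P(a) = aᵀ T_n a − (1/2N) Σ_j P(ζ_j) log( a(ζ_j) a(ζ_j^{-1}) )`. -/
def Jd (N : ℕ) {n : ℕ} (c b a : Fin (n + 1) → ℝ) : ℝ :=
  dotProduct a ((Toep c).mulVec a) -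
    (∑ j ∈ Idx N, (PPd b (zeta N j)).re *
        Real.log ((evC a (zeta N j) * evC a (zeta N j)⁻¹).re)) / (2 * N)

/-- `γ_t(a) = (1/2N) Σ_j ζ_j^t b(ζ_j)/a(ζ_j)` (a real number). -/
def gam (N : ℕ) {n : ℕ} (b a : Fin (n + 1) → ℝ) (t : ℤ) : ℝ :=
  ((∑ j ∈ Idx N, zeta N j ^ t * evC b (zeta N j) / evC a (zeta N j)) / (2 * N)).re

/-- The matrix `T_γ(a)` with `(i,j)` entry `γ_{j−i}(a)`. -/
def Tgam (N : ℕ) {n : ℕ} (b a : Fin (n + 1) → ℝ) :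
    Matrix (Fin (n + 1)) (Fin (n + 1)) ℝ :=
  fun i j => gam N b a ((j.val : ℤ) - (i.val : ℤ))

/-- `c̃_k(a) = (1/2N) Σ_j ζ_j^k P(ζ_j)/( a(ζ_j) a(ζ_j^{-1}) )` (a real number). -/
def ctil (N : ℕ) {n : ℕ} (b a : Fin (n + 1) → ℝ) (k : ℤ) : ℝ :=
  ((∑ j ∈ Idx N, zeta N j ^ k * PPd b (zeta N j) /
      (evC a (zeta N j) * evC a (zeta N j)⁻¹)) / (2 * N)).re

/-- The symmetric Toeplitz matrix `T_n(a)` with `(i,j)` entry `c̃_{|i−j|}(a)`. -/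
def TnA (N : ℕ) {n : ℕ} (b a : Fin (n + 1) → ℝ) :
    Matrix (Fin (n + 1)) (Fin (n + 1)) ℝ :=
  fun i j => ctil N b a ((max ((i : ℕ) - (j : ℕ)) ((j : ℕ) - (i : ℕ)) : ℕ) : ℤ)


/-- The gradient vector of a functional on `ℝ^{n+1}`, whose `i`-th entry is the partial
derivative in the `i`-th coordinate direction. -/
def gradVec {n : ℕ} (f : (Fin (n + 1) → ℝ) → ℝ) (a : Fin (n + 1) → ℝ) :
    Fin (n + 1) → ℝ :=
  fun i => fderiv ℝ f a (Pi.single i 1)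


/-! On the circle `a(ζ⁻¹) = conj a(ζ)`, so the logarithmic term of `𝕁_P` is `log |a(ζ_j)|²`,
whose derivative in the direction `v` is `2 Re (v(ζ_j) / a(ζ_j))`. Weighting by
`P(ζ_j) = |b(ζ_j)|²` and using `Σ_k b_k ζ^k = b(ζ⁻¹)` turns the sum into `2 T_γ(a) b`, so
`∇𝕁_P(a) = 2 (T_n a - T_γ(a) b)`. Hence `a - ½ T_n⁻¹ ∇𝕁_P(a) = T_n⁻¹ T_γ(a) b`. -/

open ComplexConjugate

section Evaluation

variable {n : ℕ}

lemma evC_inv (a : Fin (n + 1) → ℝ) (z : ℂ) :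
    evC a z⁻¹ = ∑ k : Fin (n + 1), (a k : ℂ) * z ^ (k : ℤ) := by
  simp only [evC, _root_.inv_zpow', neg_neg]

lemma evC_conj (a : Fin (n + 1) → ℝ) (z : ℂ) : evC a (conj z) = conj (evC a z) := by
  simp [evC]

def evCLM (n : ℕ) (z : ℂ) : (Fin (n + 1) → ℝ) →L[ℝ] ℂ :=
  ∑ k : Fin (n + 1), (ContinuousLinearMap.proj k).smulRight (z ^ (-(k : ℤ)))

@[simp]
lemma evCLM_apply (z : ℂ) (a : Fin (n + 1) → ℝ) : evCLM n z a = evC a z := by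
  simp [evCLM, evC, Complex.real_smul]

lemma evC_single (i : Fin (n + 1)) (z : ℂ) : evC (Pi.single i 1) z = z ^ (-(i : ℤ)) := by
  simp [evC, Pi.single_apply, apply_ite ((↑) : ℝ → ℂ), ite_mul]

end Evaluation

section UnitCircle

variable {n : ℕ} (N : ℕ) (j : ℤ)

lemma norm_zeta : ‖zeta N j‖ = 1 := by
  rw [zeta, Complex.norm_exp]
  simp

lemma zeta_ne_zero : zeta N j ≠ 0 := Complex.exp_ne_zero _

lemma evC_zeta_inv (a : Fin (n + 1) → ℝ) : evC a (zeta N j)⁻¹ = conj (evC a (zeta N j)) := by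
  rw [Complex.inv_eq_conj (norm_zeta N j), evC_conj]

lemma evC_mul_evC_zeta_inv (a : Fin (n + 1) → ℝ) :
    evC a (zeta N j) * evC a (zeta N j)⁻¹ = (normSq (evC a (zeta N j)) : ℂ) := by
  rw [evC_zeta_inv, mul_conj]

lemma PPd_zeta (b : Fin (n + 1) → ℝ) : PPd b (zeta N j) = (normSq (evC b (zeta N j)) : ℂ) :=
  evC_mul_evC_zeta_inv N j b

end UnitCircle

lemma hasFDerivAt_log_normSq {E : Type*} [NormedAddCommGroup E] [NormedSpace ℝ E]
    (L : E →L[ℝ] ℂ) {a : E} (ha : L a ≠ 0) :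
    HasFDerivAt (fun x => Real.log (normSq (L x))) ((2 : ℝ) • reCLM.comp ((L a)⁻¹ • L)) a := by
  have h := L.hasFDerivAt.norm_sq.log (pow_ne_zero 2 (norm_ne_zero_iff.mpr ha))
  simp only [← Complex.normSq_eq_norm_sq] at h
  refine h.congr_fderiv ?_
  ext v
  simp only [_root_.smul_apply, ContinuousLinearMap.comp_apply, coe_innerSL_apply, Complex.inner,
    reCLM_apply, smul_eq_mul, nsmul_eq_mul, Nat.cast_ofNat]
  rw [Complex.inv_def, mul_right_comm, re_mul_ofReal, mul_comm (L v)]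
  ring

lemma hasFDerivAt_dotProduct_mulVec {ι : Type*} [Fintype ι] (A : Matrix ι ι ℝ) (a : ι → ℝ) :
    HasFDerivAt (fun x => x ⬝ᵥ A *ᵥ x)
      (LinearMap.toContinuousLinearMap (dotProductBilin ℝ ℝ ((A + Aᵀ) *ᵥ a))) a := by
  have h := HasFDerivAt.fun_sum (u := Finset.univ) fun p _ =>
    (hasFDerivAt_apply p a).mul
      ((ContinuousLinearMap.proj p).comp (LinearMap.toContinuousLinearMap A.mulVecLin)).hasFDerivAt
  refine h.congr_fderiv ?_
  ext v
  simp only [ContinuousLinearMap.comp_apply, LinearMap.coe_toContinuousLinearMap',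
    mulVecBilin_apply, ContinuousLinearMap.proj_apply, sum_add_distrib, _root_.add_apply,
    _root_.sum_apply, _root_.smul_apply, smul_eq_mul, add_mulVec, mulVec_transpose, map_add,
    dotProductBilin_apply_apply]
  change a ⬝ᵥ A *ᵥ v + A *ᵥ a ⬝ᵥ v = _
  rw [dotProduct_mulVec, add_comm]

lemma Toep_transpose {n : ℕ} (c : Fin (n + 1) → ℝ) : (Toep c)ᵀ = Toep c := by
  ext i j
  simp [Toep, max_comm]

section Gradient

variable {n : ℕ} (N : ℕ)

lemma Tgam_mulVec_apply (b a : Fin (n + 1) → ℝ) (i : Fin (n + 1)) :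
    (Tgam N b a *ᵥ b) i =
      (∑ j ∈ Idx N, (zeta N j ^ (-(i : ℤ)) * PPd b (zeta N j) / evC a (zeta N j)).re) / (2 * N) := by
  have hterm : ∀ j, ∑ k : Fin (n + 1),
      zeta N j ^ ((k : ℤ) - i) * evC b (zeta N j) * b k / evC a (zeta N j) =
        zeta N j ^ (-(i : ℤ)) * PPd b (zeta N j) / evC a (zeta N j) := by
    intro j
    rw [PPd, evC_inv, Finset.mul_sum, Finset.mul_sum, Finset.sum_div]
    refine Finset.sum_congr rfl fun k _ => ?_
    rw [zpow_sub₀ (zeta_ne_zero N j), _root_.zpow_neg]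
    ring
  rw [← Complex.re_sum, ← Complex.div_ofReal_re]
  simp only [mulVec, dotProduct, Tgam, gam, ← Complex.re_mul_ofReal, ← Complex.re_sum]
  push_cast
  congr 1
  simp only [div_mul_eq_mul_div, ← Finset.sum_div, Finset.sum_mul]
  rw [Finset.sum_comm]
  simp only [hterm]

lemma Jd_eq (c b : Fin (n + 1) → ℝ) :
    Jd N c b = fun a => a ⬝ᵥ Toep c *ᵥ a -
      (∑ j ∈ Idx N, (PPd b (zeta N j)).re * Real.log (normSq (evCLM n (zeta N j) a))) / (2 * N) := by
  funext a
  simp only [Jd, evCLM_apply, evC_mul_evC_zeta_inv, Complex.ofReal_re]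

lemma gradVec_Jd (c b a : Fin (n + 1) → ℝ) (ha : ∀ j ∈ Idx N, evC a (zeta N j) ≠ 0) :
    gradVec (Jd N c b) a = (2 : ℝ) • (Toep c *ᵥ a - Tgam N b a *ᵥ b) := by
  have hlog := fun j (hj : j ∈ Idx N) =>
    (hasFDerivAt_log_normSq (evCLM n (zeta N j)) (by simpa using ha j hj)).const_mul
      (PPd b (zeta N j)).re
  have hJ := (hasFDerivAt_dotProduct_mulVec (Toep c) a).fun_sub
    ((HasFDerivAt.fun_sum hlog).mul_const (2 * N : ℝ)⁻¹)
  simp only [← div_eq_mul_inv, ← Jd_eq] at hJ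
  funext i
  have hterm : ∀ j ∈ Idx N, ((PPd b (zeta N j)).re • (2 : ℝ) •
      reCLM.comp ((evCLM n (zeta N j) a)⁻¹ • evCLM n (zeta N j))) (Pi.single i 1) =
        2 * (zeta N j ^ (-(i : ℤ)) * PPd b (zeta N j) / evC a (zeta N j)).re := by
    intro j _
    -- `P(ζ_j)` is real, so it can be moved inside `Re`
    simp only [_root_.smul_apply, ContinuousLinearMap.coe_comp, Function.comp_apply,
      reCLM_apply, evCLM_apply, evC_single, PPd_zeta, smul_eq_mul, ofReal_re]
    rw [mul_div_right_comm, re_mul_ofReal, div_eq_inv_mul]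
    ring
  rw [gradVec, hJ.fderiv, _root_.sub_apply, _root_.smul_apply, _root_.sum_apply,
    Finset.sum_congr rfl hterm, ← Finset.mul_sum, Pi.smul_apply, Pi.sub_apply, Tgam_mulVec_apply]
  simp only [LinearMap.coe_toContinuousLinearMap', dotProductBilin_apply_apply, Toep_transpose,
    dotProduct_single_one, add_mulVec, Pi.add_apply, smul_eq_mul]
  ring

end Gradient

theorem stmt8_general (N n : ℕ)
    (c b : Fin (n + 1) → ℝ) (hT : (Toep c).PosDef)
    (a : Fin (n + 1) → ℝ) (ha : ∀ j ∈ Idx N, evC a (zeta N j) ≠ 0) :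
    ((∑ k : Fin (n + 1), c k * a k) / (∑ k : Fin (n + 1), gam N b a (k.val : ℤ) * b k)) •
        ((Toep c)⁻¹.mulVec ((Tgam N b a).mulVec b)) =
      ((∑ k : Fin (n + 1), c k * a k) /
          (∑ k : Fin (n + 1), gam N b a (k.val : ℤ) * b k)) •
        (a - (1 / 2 : ℝ) • (Toep c)⁻¹.mulVec (gradVec (Jd N c b) a)) := by
  have hdet : IsUnit (Toep c).det := (isUnit_iff_isUnit_det _).mp hT.isUnit
  rw [gradVec_Jd N c b a ha, mulVec_smul, smul_smul, mulVec_sub, mulVec_mulVec a (Toep c)⁻¹,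
    nonsing_inv_mul _ hdet, one_mulVec]
  norm_num

/-- with `σ²(a) = (Σ_k c_k a_k)/(Σ_k γ_k(a) b_k)`, the iteration map
`a ↦ σ²(a) T_n⁻¹ T_γ(a) b` coincides with the scaled quasi-Newton step
`a ↦ σ²(a) [ a − ½ T_n⁻¹ ∇𝕁_P(a) ]`. -/
theorem stmt8 (N n : ℕ) (hn : 1 ≤ n) (hNn : n < N)
    (c b : Fin (n + 1) → ℝ) (hb0 : b 0 = 1) (hT : (Toep c).PosDef)
    (a : Fin (n + 1) → ℝ) (ha : ∀ j ∈ Idx N, evC a (zeta N j) ≠ 0)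
    (hden : ∑ k : Fin (n + 1), gam N b a (k.val : ℤ) * b k ≠ 0) :
    ((∑ k : Fin (n + 1), c k * a k) / (∑ k : Fin (n + 1), gam N b a (k.val : ℤ) * b k)) •
        ((Toep c)⁻¹.mulVec ((Tgam N b a).mulVec b)) =
      ((∑ k : Fin (n + 1), c k * a k) /
          (∑ k : Fin (n + 1), gam N b a (k.val : ℤ) * b k)) •
        (a - (1 / 2 : ℝ) • (Toep c)⁻¹.mulVec (gradVec (Jd N c b) a)) :=
  stmt8_general N n c b hT a ha
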